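/- Let p ∈ (0,1), let K be a p-core CRG, and let x be a nonnegative weight vector summing to 1 attaining the minimum g_K(p). If p ≤ 1/2, then x(v) ≤ g_K(p)/(1−p) for every black vertex v. If p ≥ 1/2, then x(v) ≤ g_K(p)/p for every white vertex v. -/

import Mathlib

/-- Colors for edges of a colored regularity graph. -/
inductive EColor : Type
  | white
  | gray
  | black
deriving DecidableEq

/-- A colored regularity graph (CRG) on a finite vertex type `V`: each vertex is
white or black (`vWhite v = true` means white), and each pair of distinct vertices
gets a symmetric edge color (white, gray or black). -/
structure CRG (V : Type) [Fintype V] where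
  vWhite : V → Bool
  ecolor : V → V → EColor
  ecolor_symm : ∀ u v, ecolor u v = ecolor v u

namespace CRG

variable {V : Type} [Fintype V] [DecidableEq V]

/-- The matrix `M_K(p)`. -/
noncomputable def M (K : CRG V) (p : ℝ) (u v : V) : ℝ :=
  if u = v then (if K.vWhite u then p else 1 - p)
  else
    match K.ecolor u v with
    | EColor.white => p
    | EColor.black => 1 - p
    | EColor.gray => 0

/-- The function `g_K(p)`: the minimum of `xᵀ M_K(p) x` over nonnegative weight
vectors summing to `1`. -/
noncomputable def g (K : CRG V) (p : ℝ) : ℝ :=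
  sInf {r : ℝ | ∃ x : V → ℝ, (∀ v, 0 ≤ x v) ∧ (∑ v, x v) = 1 ∧
    r = ∑ u, ∑ v, x u * K.M p u v * x v}

/-- The sub-CRG induced on a subset `s` of the vertices. -/
def sub (K : CRG V) (s : Finset V) : CRG {v // v ∈ s} where
  vWhite := fun v => K.vWhite v.1
  ecolor := fun u v => K.ecolor u.1 v.1
  ecolor_symm := fun u v => K.ecolor_symm u.1 v.1

/-- `K` is `p`-core if `g_K(p) < g_{K'}(p)` for every proper (nonempty) sub-CRG `K'`. -/
def IsPCore (K : CRG V) (p : ℝ) : Prop :=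
  ∀ s : Finset V, s.Nonempty → s ≠ Finset.univ → K.g p < (K.sub s).g p

/-- `x` is an optimal weight vector for `K` at `p`. -/
def IsOptWeight (K : CRG V) (p : ℝ) (x : V → ℝ) : Prop :=
  (∀ v, 0 ≤ x v) ∧ (∑ v, x v) = 1 ∧
    (∑ u, ∑ v, x u * K.M p u v * x v) = K.g p

/-- The gray degree `d_G(v)`: total weight of gray neighbors of `v`. -/
noncomputable def dG (K : CRG V) (x : V → ℝ) (v : V) : ℝ :=
  ∑ w ∈ Finset.univ.filter fun w => w ≠ v ∧ K.ecolor v w = EColor.gray, x w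

/-- The white degree `d_W(v)`: total weight of white neighbors of `v`, including `v`
itself if `v` is white. -/
noncomputable def dW (K : CRG V) (x : V → ℝ) (v : V) : ℝ :=
  (∑ w ∈ Finset.univ.filter fun w => w ≠ v ∧ K.ecolor v w = EColor.white, x w) +
    (if K.vWhite v then x v else 0)

/-- The black degree `d_B(v)`: total weight of black neighbors of `v`, including `v`
itself if `v` is black. -/
noncomputable def dB (K : CRG V) (x : V → ℝ) (v : V) : ℝ :=
  (∑ w ∈ Finset.univ.filter fun w => w ≠ v ∧ K.ecolor v w = EColor.black, x w) +
    (if K.vWhite v then 0 else x v)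

/-- The number of gray neighbors of `v`. -/
def grayDeg (K : CRG V) (v : V) : ℕ :=
  (Finset.univ.filter fun w => w ≠ v ∧ K.ecolor v w = EColor.gray).card

end CRG

/-- A graph `H` embeds in a CRG `K`, written `H ↦ K`. -/
def EmbedsIn {α : Type*} {V : Type} [Fintype V] (H : SimpleGraph α) (K : CRG V) : Prop :=
  ∃ φ : α → V,
    (∀ a b : α, H.Adj a b →
      (φ a = φ b ∧ K.vWhite (φ a) = false) ∨
      (φ a ≠ φ b ∧ (K.ecolor (φ a) (φ b) = EColor.black ∨ K.ecolor (φ a) (φ b) = EColor.gray))) ∧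
    (∀ a b : α, a ≠ b → ¬H.Adj a b →
      (φ a = φ b ∧ K.vWhite (φ a) = true) ∨
      (φ a ≠ φ b ∧ (K.ecolor (φ a) (φ b) = EColor.white ∨ K.ecolor (φ a) (φ b) = EColor.gray)))

/-
At a minimiser `x` of the quadratic form `Q(y) = yᵀ M y` on the standard simplex, moving along
`x + s (x - e_v)` (a little mass taken from a vertex `v` with `x v > 0`) cannot decrease `Q`; to
first order this says `(M x)_v ≤ Q(x)`. Since `M_K(p)` has nonnegative entries, `M_vv x_v ≤ (M x)_v ≤ g_K(p)`, and
`M_vv` is `1 - p` for black and `p` for white vertices.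
-/

open Filter Topology Matrix

lemma nonneg_of_forall_mul_add_sq_mul_nonneg {b c δ : ℝ} (hδ : 0 < δ)
    (h : ∀ s ∈ Set.Ioc 0 δ, 0 ≤ s * b + s ^ 2 * c) : 0 ≤ b := by
  have hlim : Tendsto (fun s : ℝ => b + s * c) (𝓝[>] 0) (𝓝 b) := by
    have hcont : Continuous fun s : ℝ => b + s * c := by fun_prop
    simpa using (hcont.tendsto 0).mono_left nhdsWithin_le_nhds
  refine ge_of_tendsto hlim ?_
  filter_upwards [Ioc_mem_nhdsGT hδ] with s hs
  have hsb := h s hs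
  have hs0 : 0 < s := hs.1
  nlinarith

namespace Matrix

variable {ι : Type*} [Fintype ι]

lemma dotProduct_mulVec_eq_sum (A : Matrix ι ι ℝ) (x y : ι → ℝ) :
    x ⬝ᵥ A *ᵥ y = ∑ u, ∑ v, x u * A u v * y v := by
  simp [dotProduct, mulVec, Finset.mul_sum, mul_assoc]

lemma IsSymm.dotProduct_mulVec_comm {A : Matrix ι ι ℝ} (hA : A.IsSymm) (x y : ι → ℝ) :
    x ⬝ᵥ A *ᵥ y = y ⬝ᵥ A *ᵥ x := by
  rw [dotProduct_mulVec, dotProduct_comm, ← hA.eq, vecMul_transpose, hA.eq]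

lemma IsSymm.quadForm_add_smul {A : Matrix ι ι ℝ} (hA : A.IsSymm) (x d : ι → ℝ) (s : ℝ) :
    (x + s • d) ⬝ᵥ A *ᵥ (x + s • d) =
      x ⬝ᵥ A *ᵥ x + s * (2 * (d ⬝ᵥ A *ᵥ x)) + s ^ 2 * (d ⬝ᵥ A *ᵥ d) := by
  simp only [mulVec_add, mulVec_smul, add_dotProduct, dotProduct_add, smul_dotProduct,
    dotProduct_smul, smul_eq_mul, hA.dotProduct_mulVec_comm x d]
  ring

lemma IsSymm.dotProduct_mulVec_nonneg_of_isMinOn {A : Matrix ι ι ℝ} (hA : A.IsSymm)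
    {S : Set (ι → ℝ)} {x d : ι → ℝ} (hmin : IsMinOn (fun y => y ⬝ᵥ A *ᵥ y) S x) {δ : ℝ}
    (hδ : 0 < δ) (hseg : ∀ s ∈ Set.Ioc 0 δ, x + s • d ∈ S) :
    0 ≤ d ⬝ᵥ A *ᵥ x := by
  suffices 0 ≤ 2 * (d ⬝ᵥ A *ᵥ x) by linarith
  refine nonneg_of_forall_mul_add_sq_mul_nonneg (c := d ⬝ᵥ A *ᵥ d) hδ fun s hs => ?_
  have hle := isMinOn_iff.mp hmin _ (hseg s hs)
  rw [hA.quadForm_add_smul] at hle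
  linarith

variable [DecidableEq ι]

lemma add_smul_sub_single_mem_stdSimplex {x : ι → ℝ} (hx : x ∈ stdSimplex ℝ ι) (v : ι)
    {s : ℝ} (hs : s ∈ Set.Ioc 0 (x v)) :
    x + s • (x - Pi.single v 1) ∈ stdSimplex ℝ ι := by
  obtain ⟨hx0, hx1⟩ := hx
  refine ⟨fun w => ?_, ?_⟩
  · by_cases hw : w = v
    · subst hw
      simp only [Pi.add_apply, Pi.smul_apply, Pi.sub_apply, Pi.single_eq_same, smul_eq_mul]
      nlinarith [hs.1, hs.2, hx0 w]
    · simp only [Pi.add_apply, Pi.smul_apply, Pi.sub_apply, Pi.single_eq_of_ne hw, smul_eq_mul]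
      nlinarith [hs.1, hx0 w]
  · simp [Finset.sum_add_distrib, Finset.sum_sub_distrib, ← Finset.mul_sum, hx1]

lemma IsSymm.mulVec_apply_le_of_isMinOn_stdSimplex {A : Matrix ι ι ℝ} (hA : A.IsSymm)
    {x : ι → ℝ} (hx : x ∈ stdSimplex ℝ ι)
    (hmin : IsMinOn (fun y => y ⬝ᵥ A *ᵥ y) (stdSimplex ℝ ι) x) {v : ι} (hv : 0 < x v) :
    (A *ᵥ x) v ≤ x ⬝ᵥ A *ᵥ x := by
  have hfirst := hA.dotProduct_mulVec_nonneg_of_isMinOn hmin hv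
    fun s hs => add_smul_sub_single_mem_stdSimplex hx v hs
  rwa [sub_dotProduct, single_one_dotProduct, sub_nonneg] at hfirst

lemma IsSymm.diag_mul_le_of_isMinOn_stdSimplex {A : Matrix ι ι ℝ} (hA : A.IsSymm)
    (hA0 : ∀ u w, 0 ≤ A u w) {x : ι → ℝ} (hx : x ∈ stdSimplex ℝ ι)
    (hmin : IsMinOn (fun y => y ⬝ᵥ A *ᵥ y) (stdSimplex ℝ ι) x) (v : ι) :
    A v v * x v ≤ x ⬝ᵥ A *ᵥ x := by
  have hAx : A v v * x v ≤ (A *ᵥ x) v :=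
    Finset.single_le_sum (fun w _ => mul_nonneg (hA0 v w) (hx.1 w)) (Finset.mem_univ v)
  rcases (hx.1 v).eq_or_lt with hv | hv
  · rw [← hv, mul_zero]
    exact dotProduct_nonneg_of_nonneg hx.1 fun u =>
      Finset.sum_nonneg fun w _ => mul_nonneg (hA0 u w) (hx.1 w)
  · exact hAx.trans (hA.mulVec_apply_le_of_isMinOn_stdSimplex hx hmin hv)

end Matrix

namespace CRG

variable {V : Type} [Fintype V] [DecidableEq V] (K : CRG V) {p : ℝ}

lemma M_nonneg (hp : p ∈ Set.Icc (0 : ℝ) 1) (u v : V) : 0 ≤ K.M p u v := by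
  obtain ⟨h0, h1⟩ := hp
  unfold M
  split_ifs
  · exact h0
  · linarith
  · split <;> linarith

lemma M_self_of_black (p : ℝ) {v : V} (hv : K.vWhite v = false) : K.M p v v = 1 - p := by
  simp [M, hv]

lemma M_self_of_white (p : ℝ) {v : V} (hv : K.vWhite v = true) : K.M p v v = p := by
  simp [M, hv]

lemma isSymm_M (p : ℝ) : (Matrix.of (K.M p)).IsSymm := by
  refine IsSymm.ext fun u v => ?_
  by_cases h : u = v
  · subst h; rfl
  · simp only [of_apply, M, if_neg h, if_neg (Ne.symm h), K.ecolor_symm u v]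

lemma g_le (hp : p ∈ Set.Icc (0 : ℝ) 1) {y : V → ℝ} (hy : y ∈ stdSimplex ℝ V) :
    K.g p ≤ y ⬝ᵥ Matrix.of (K.M p) *ᵥ y := by
  simp only [dotProduct_mulVec_eq_sum, of_apply]
  refine csInf_le ⟨0, ?_⟩ ⟨y, hy.1, hy.2, rfl⟩
  rintro r ⟨z, hz0, -, rfl⟩
  exact Finset.sum_nonneg fun u _ => Finset.sum_nonneg fun w _ =>
    mul_nonneg (mul_nonneg (hz0 u) (K.M_nonneg hp u w)) (hz0 w)

variable {K}

lemma IsOptWeight.isMinOn (hp : p ∈ Set.Icc (0 : ℝ) 1) {x : V → ℝ} (hx : K.IsOptWeight p x) :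
    IsMinOn (fun y => y ⬝ᵥ Matrix.of (K.M p) *ᵥ y) (stdSimplex ℝ V) x := by
  refine isMinOn_iff.mpr fun y hy => ?_
  have hxg : x ⬝ᵥ Matrix.of (K.M p) *ᵥ x = K.g p := by
    simpa only [dotProduct_mulVec_eq_sum, of_apply] using hx.2.2
  exact hxg ▸ K.g_le hp hy

lemma IsOptWeight.M_self_mul_le (hp : p ∈ Set.Icc (0 : ℝ) 1) {x : V → ℝ}
    (hx : K.IsOptWeight p x) (v : V) : K.M p v v * x v ≤ K.g p := by
  have hdiag := (K.isSymm_M p).diag_mul_le_of_isMinOn_stdSimplex (K.M_nonneg hp) ⟨hx.1, hx.2.1⟩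
    (hx.isMinOn hp) v
  simp only [dotProduct_mulVec_eq_sum, of_apply] at hdiag
  rwa [hx.2.2] at hdiag

end CRG

theorem pcore_weight_bound_general {V : Type} [Fintype V] [DecidableEq V]
    (p : ℝ) (hp : p ∈ Set.Ioo (0 : ℝ) 1) (K : CRG V)
    (x : V → ℝ) (hx : K.IsOptWeight p x) :
    (p ≤ 1 / 2 → ∀ v : V, K.vWhite v = false → x v ≤ K.g p / (1 - p)) ∧
    (1 / 2 ≤ p → ∀ v : V, K.vWhite v = true → x v ≤ K.g p / p) := by
  obtain ⟨hp0, hp1⟩ := hp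
  have hbound := hx.M_self_mul_le ⟨hp0.le, hp1.le⟩
  refine ⟨fun _ v hv => ?_, fun _ v hv => ?_⟩
  · have hv_bound := hbound v
    rw [K.M_self_of_black p hv] at hv_bound
    rw [le_div_iff₀ (sub_pos.mpr hp1)]
    linarith
  · have hv_bound := hbound v
    rw [K.M_self_of_white p hv] at hv_bound
    rw [le_div_iff₀ hp0]
    linarith

theorem pcore_weight_bound {V : Type} [Fintype V] [DecidableEq V] [Nonempty V]
    (p : ℝ) (hp : p ∈ Set.Ioo (0 : ℝ) 1) (K : CRG V) (hcore : K.IsPCore p)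
    (x : V → ℝ) (hx : K.IsOptWeight p x) :
    (p ≤ 1 / 2 → ∀ v : V, K.vWhite v = false → x v ≤ K.g p / (1 - p)) ∧
    (1 / 2 ≤ p → ∀ v : V, K.vWhite v = true → x v ≤ K.g p / p) :=
  pcore_weight_bound_general p hp K x hx
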